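/- Let H₁ and H₂ be d×d Hermitian matrices. Then |Tr[ln(e^{-(H₁+H₂)} + I)] - Tr[ln(e^{-H₁} + I)]| ≤ ‖H₂‖₁, where ‖·‖₁ denotes the trace norm. -/

import Mathlib

open Matrix ComplexOrder

/-- `Tr[ln B]` via the continuous functional calculus. -/
noncomputable def trLog {d : ℕ} (B : Matrix (Fin d) (Fin d) ℂ) : ℝ :=
  ((cfc Real.log B).trace).re

/-- Trace norm `‖H‖₁ = Tr[|H|]` of a Hermitian matrix, via the continuous
functional calculus. -/
noncomputable def traceNorm {d : ℕ} (H : Matrix (Fin d) (Fin d) ℂ) : ℝ :=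
  ((cfc (fun x : ℝ => |x|) H).trace).re

section FermiAux
open intervalIntegral
open Matrix ComplexOrder NormedSpace intervalIntegral

variable {d : ℕ}

noncomputable def hfun (x : ℝ) : ℝ := Real.log (Real.exp x + 1)
noncomputable def sig (x : ℝ) : ℝ := Real.exp x / (Real.exp x + 1)
noncomputable def tau (x : ℝ) : ℝ := Real.exp x / (Real.exp x + 1) ^ 2


lemma exp1_pos (x : ℝ) : 0 < Real.exp x + 1 := by positivity

lemma hasDerivAt_hfun (x : ℝ) : HasDerivAt hfun (sig x) x := by
  have h1 : HasDerivAt (fun y : ℝ => Real.exp y + 1) (Real.exp x) x :=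
    (Real.hasDerivAt_exp x).add_const 1
  have h2 := (Real.hasDerivAt_log (exp1_pos x).ne').comp x h1
  have : hfun = Real.log ∘ (fun y : ℝ => Real.exp y + 1) := rfl
  rw [this, sig, div_eq_inv_mul]
  exact h2

lemma hasDerivAt_sig (x : ℝ) : HasDerivAt sig (tau x) x := by
  have h1 : HasDerivAt (fun y : ℝ => Real.exp y + 1) (Real.exp x) x :=
    (Real.hasDerivAt_exp x).add_const 1
  have := (Real.hasDerivAt_exp x).div h1 (exp1_pos x).ne'
  have e : tau x = (Real.exp x * (Real.exp x + 1) - Real.exp x * Real.exp x) / (Real.exp x + 1) ^ 2 := by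
    unfold tau; ring
  rw [e]; exact this

lemma tau_nonneg (x : ℝ) : 0 ≤ tau x := by
  unfold tau; positivity

lemma sig_nonneg (x : ℝ) : 0 ≤ sig x := by unfold sig; positivity

lemma sig_le_one (x : ℝ) : sig x ≤ 1 := by
  rw [sig, div_le_one (exp1_pos x)]; linarith



lemma continuous_exp1 : Continuous (fun x : ℝ => Real.exp x + 1) :=
  Real.continuous_exp.add continuous_const

lemma continuous_sig : Continuous sig :=
  Real.continuous_exp.div continuous_exp1 fun x => (exp1_pos x).ne'

lemma continuous_tau : Continuous tau :=
  Real.continuous_exp.div (continuous_exp1.pow 2) fun x => (pow_ne_zero 2 (exp1_pos x).ne')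

lemma taylor_aux (a x : ℝ) :
    ∫ u in a..x, (x - u) * tau u = hfun x - hfun a - sig a * (x - a) := by
  have key : ∀ u ∈ Set.uIcc a x, HasDerivAt (fun y => (x - y) * sig y + hfun y)
      ((x - u) * tau u) u := by
    intro u _
    have h1 : HasDerivAt (fun y : ℝ => (x - y) * sig y) (-(sig u) + (x - u) * tau u) u := by
      have := (((hasDerivAt_id u).const_sub x)).mul (hasDerivAt_sig u)
      simp at this
      exact this
    have := h1.add (hasDerivAt_hfun u)
    exact this.congr_deriv (by ring)
  have hint : IntervalIntegrable (fun u => (x - u) * tau u) MeasureTheory.volume a x := by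
    exact ((continuous_const.sub continuous_id).mul continuous_tau).intervalIntegrable _ _
  have := intervalIntegral.integral_eq_sub_of_hasDerivAt key hint
  rw [this]; ring

lemma taylor_hinge (a b x : ℝ) (hax : a ≤ x) (hxb : x ≤ b) :
    ∫ u in a..b, max (x - u) 0 * tau u = hfun x - hfun a - sig a * (x - a) := by
  have hcont : Continuous (fun u => max (x - u) 0 * tau u) :=
    ((continuous_const.sub continuous_id).max continuous_const).mul continuous_tau
  have h1 : ∫ u in a..x, max (x - u) 0 * tau u = ∫ u in a..x, (x - u) * tau u := by
    apply intervalIntegral.integral_congr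
    intro u hu
    rw [Set.uIcc_of_le hax] at hu
    have : (0:ℝ) ≤ x - u := by linarith [hu.2]
    simp [max_eq_left this]
  have h2 : ∫ u in x..b, max (x - u) 0 * tau u = 0 := by
    have : ∫ u in x..b, max (x - u) 0 * tau u = ∫ u in x..b, (0:ℝ) := by
      apply intervalIntegral.integral_congr
      intro u hu
      rw [Set.uIcc_of_le hxb] at hu
      have : x - u ≤ 0 := by linarith [hu.1]
      simp [max_eq_right this]
    simp [this]
  have hadd := intervalIntegral.integral_add_adjacent_intervals
    (hcont.intervalIntegrable (μ := MeasureTheory.volume) a x) (hcont.intervalIntegrable (μ := MeasureTheory.volume) x b)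
  rw [← hadd, h1, h2, taylor_aux, add_zero]



lemma cont_hinge_sum {d : ℕ} (v : Fin d → ℝ) :
    Continuous (fun u => (∑ i, max (v i - u) 0) * tau u) := by
  refine Continuous.mul ?_ continuous_tau
  exact continuous_finset_sum _ fun i _ =>
    (continuous_const.sub continuous_id).max continuous_const

lemma key_real {d : ℕ} (c : ℝ) (hc : 0 ≤ c) (lam mu : Fin d → ℝ)
    (hsum : ∑ i, mu i ≤ (∑ i, lam i) + c)
    (hhinge : ∀ u : ℝ, ∑ i, max (mu i - u) 0 ≤ (∑ i, max (lam i - u) 0) + c) :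
    ∑ i, hfun (mu i) ≤ (∑ i, hfun (lam i)) + c := by
  set R : ℝ := (∑ i, |lam i|) + (∑ i, |mu i|) with hR
  have hRnn : 0 ≤ R := by positivity
  set a : ℝ := -R - 1 with ha
  set b : ℝ := R + 1 with hb
  have hab : a ≤ b := by simp only [ha, hb]; linarith
  have hmem : ∀ v : Fin d → ℝ, (∀ i, |v i| ≤ R) → ∀ i, a ≤ v i ∧ v i ≤ b := by
    intro v hv i
    have := abs_le.mp (hv i)
    constructor <;> [skip; skip] <;> simp only [ha, hb] <;> linarith [this.1, this.2]
  have hlam : ∀ i, a ≤ lam i ∧ lam i ≤ b := by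
    refine hmem lam (fun i => ?_)
    calc |lam i| ≤ ∑ j, |lam j| :=
          Finset.single_le_sum (fun j _ => abs_nonneg (lam j)) (Finset.mem_univ i)
      _ ≤ R := by
          have : (0:ℝ) ≤ ∑ j, |mu j| := by positivity
          simp only [hR]; linarith
  have hmu : ∀ i, a ≤ mu i ∧ mu i ≤ b := by
    refine hmem mu (fun i => ?_)
    calc |mu i| ≤ ∑ j, |mu j| :=
          Finset.single_le_sum (fun j _ => abs_nonneg (mu j)) (Finset.mem_univ i)
      _ ≤ R := by
          have : (0:ℝ) ≤ ∑ j, |lam j| := by positivity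
          simp only [hR]; linarith
  -- representation
  have rep : ∀ v : Fin d → ℝ, (∀ i, a ≤ v i ∧ v i ≤ b) →
      ∫ u in a..b, (∑ i, max (v i - u) 0) * tau u
        = ∑ i, (hfun (v i) - hfun a - sig a * (v i - a)) := by
    intro v hv
    have : ∀ u : ℝ, (∑ i, max (v i - u) 0) * tau u = ∑ i, max (v i - u) 0 * tau u :=
      fun u => Finset.sum_mul ..
    simp_rw [this]
    rw [intervalIntegral.integral_finset_sum]
    · exact Finset.sum_congr rfl fun i _ => taylor_hinge a b (v i) (hv i).1 (hv i).2
    · intro i _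
      exact (((continuous_const.sub continuous_id).max continuous_const).mul
        continuous_tau).intervalIntegrable (μ := MeasureTheory.volume) _ _
  have hIc : ∫ u in a..b, c * tau u = c * (sig b - sig a) := by
    rw [intervalIntegral.integral_const_mul]
    congr 1
    exact intervalIntegral.integral_eq_sub_of_hasDerivAt
      (fun u _ => hasDerivAt_sig u) (continuous_tau.intervalIntegrable _ _)
  have hmono : ∫ u in a..b, (∑ i, max (mu i - u) 0) * tau u
      ≤ ∫ u in a..b, ((∑ i, max (lam i - u) 0) * tau u + c * tau u) := by
    apply intervalIntegral.integral_mono_on hab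
    · exact (cont_hinge_sum mu).intervalIntegrable _ _
    · exact ((cont_hinge_sum lam).add (continuous_const.mul continuous_tau)).intervalIntegrable _ _
    · intro u _
      have h1 := hhinge u
      have h2 := tau_nonneg u
      nlinarith [mul_le_mul_of_nonneg_right h1 h2]
  have hsplit : ∫ u in a..b, ((∑ i, max (lam i - u) 0) * tau u + c * tau u)
      = (∫ u in a..b, (∑ i, max (lam i - u) 0) * tau u) + c * (sig b - sig a) := by
    rw [intervalIntegral.integral_add (f := fun u => (∑ i, max (lam i - u) 0) * tau u) (g := fun u => c * tau u) ((cont_hinge_sum lam).intervalIntegrable _ _)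
      ((continuous_const.mul continuous_tau : Continuous fun u => c * tau u).intervalIntegrable _ _), hIc]
  have e1 := rep mu hmu
  have e2 := rep lam hlam
  rw [e1, hsplit, e2] at hmono
  simp only [Finset.sum_sub_distrib] at hmono
  have hsig_mul : sig a * (∑ i, mu i) - sig a * (∑ i, lam i) ≤ sig a * c := by
    rw [← mul_sub]
    exact (mul_le_mul_of_nonneg_left (by linarith) (sig_nonneg a))
  have hfin : c * sig b ≤ c := mul_le_of_le_one_right hc (sig_le_one b)
  simp only [← Finset.mul_sum] at hmono
  have hdist : ∀ v : Fin d → ℝ, ∑ i, (v i - a) = (∑ i, v i) - d * a := by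
    intro v
    rw [Finset.sum_sub_distrib, Finset.sum_const]
    simp [Finset.card_univ, nsmul_eq_mul]
  rw [hdist mu, hdist lam] at hmono
  nlinarith [hmono, hsig_mul, hfin]


lemma psd_diag_entry_nonneg {P : Matrix (Fin d) (Fin d) ℂ} (hP : P.PosSemidef) (i : Fin d) :
    0 ≤ P i i := by
  exact hP.diag_nonneg

lemma psd_re_trace_nonneg {P : Matrix (Fin d) (Fin d) ℂ} (hP : P.PosSemidef) :
    0 ≤ P.trace.re := by
  rw [Matrix.trace, Complex.re_sum]
  exact Finset.sum_nonneg fun i _ =>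
    (Complex.le_def.mp (psd_diag_entry_nonneg hP i)).1

lemma psd_re_trace_mul_nonneg {S T : Matrix (Fin d) (Fin d) ℂ}
    (hS : S.PosSemidef) (hT : T.PosSemidef) : 0 ≤ (S * T).trace.re := by
  open scoped MatrixOrder in
  · have h0 : (0:Matrix (Fin d) (Fin d) ℂ) ≤ S := nonneg_iff_posSemidef.mpr hS
    have key : S * T = CFC.sqrt S * (CFC.sqrt S * T) := by
      rw [← mul_assoc, CFC.sqrt_mul_sqrt_self S h0]
    rw [key, Matrix.trace_mul_comm]
    have hpsd : ((CFC.sqrt S * T) * CFC.sqrt S).PosSemidef := by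
      have h2 := hT.mul_mul_conjTranspose_same (CFC.sqrt S)
      rwa [(nonneg_iff_posSemidef.mp (CFC.sqrt_nonneg S)).1.eq] at h2
    exact psd_re_trace_nonneg hpsd

section unitary_helpers

variable {U : Matrix (Fin d) (Fin d) ℂ}

lemma uconj_mul (hU : U ∈ Matrix.unitaryGroup (Fin d) ℂ) (c e : Fin d → ℂ) :
    (U * Matrix.diagonal c * star U) * (U * Matrix.diagonal e * star U)
      = U * Matrix.diagonal (fun i => c i * e i) * star U := by
  have h : star U * U = 1 := Matrix.mem_unitaryGroup_iff'.mp hU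
  calc (U * Matrix.diagonal c * star U) * (U * Matrix.diagonal e * star U)
      = U * (Matrix.diagonal c * (star U * U) * Matrix.diagonal e) * star U := by
        simp only [mul_assoc]
    _ = U * Matrix.diagonal (fun i => c i * e i) * star U := by
        rw [h, mul_one, Matrix.diagonal_mul_diagonal]

lemma uconj_trace (hU : U ∈ Matrix.unitaryGroup (Fin d) ℂ) (c : Fin d → ℂ) :
    (U * Matrix.diagonal c * star U).trace = ∑ i, c i := by
  have h : star U * U = 1 := Matrix.mem_unitaryGroup_iff'.mp hU
  rw [Matrix.trace_mul_cycle, h, one_mul, Matrix.trace_diagonal]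

lemma uconj_psd (hU : U ∈ Matrix.unitaryGroup (Fin d) ℂ) {c : Fin d → ℂ} (hc : ∀ i, 0 ≤ c i) :
    (U * Matrix.diagonal c * star U).PosSemidef := by
  have h2 := (Matrix.PosSemidef.diagonal (fun i => hc i) :
      (Matrix.diagonal c).PosSemidef).mul_mul_conjTranspose_same U
  rwa [← Matrix.star_eq_conjTranspose] at h2

lemma uconj_sub (c e : Fin d → ℂ) :
    U * Matrix.diagonal c * star U - U * Matrix.diagonal e * star U
      = U * Matrix.diagonal (c - e) * star U := by
  have hd : Matrix.diagonal (c - e) = Matrix.diagonal c - Matrix.diagonal e := by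
    rw [Matrix.diagonal_sub]; rfl
  rw [hd, Matrix.mul_sub, Matrix.sub_mul]

lemma uconj_one (hU : U ∈ Matrix.unitaryGroup (Fin d) ℂ) :
    U * Matrix.diagonal (fun _ => (1:ℂ)) * star U = 1 := by
  have h : U * star U = 1 := Matrix.mem_unitaryGroup_iff.mp hU
  have : Matrix.diagonal (fun _ : Fin d => (1:ℂ)) = 1 := Matrix.diagonal_one
  rw [this, mul_one, h]

end unitary_helpers








section spectral
variable {X : Matrix (Fin d) (Fin d) ℂ}

lemma shift_decomp (hX : X.IsHermitian) (u : ℝ) :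
    X - (u : ℂ) • 1 = (hX.eigenvectorUnitary : Matrix (Fin d) (Fin d) ℂ) *
        Matrix.diagonal (fun i => ((hX.eigenvalues i - u : ℝ) : ℂ)) *
        star (hX.eigenvectorUnitary : Matrix (Fin d) (Fin d) ℂ) := by
  set U := (hX.eigenvectorUnitary : Matrix (Fin d) (Fin d) ℂ) with hUdef
  have hU : U ∈ Matrix.unitaryGroup (Fin d) ℂ := hX.eigenvectorUnitary.2
  have h1 : (u : ℂ) • (1 : Matrix (Fin d) (Fin d) ℂ)
      = U * Matrix.diagonal (fun _ => (u : ℂ)) * star U := by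
    have hs : Matrix.diagonal (fun _ : Fin d => (u : ℂ)) = (u:ℂ) • 1 := by
      ext i j
      by_cases hij : i = j <;>
        simp [Matrix.diagonal_apply, Matrix.one_apply, hij]
    rw [hs]
    have h2 : U * star U = 1 := Matrix.mem_unitaryGroup_iff.mp hU
    rw [Matrix.mul_smul, mul_one, Matrix.smul_mul, h2]
  conv_lhs => rw [hX.spectral_theorem, Unitary.conjStarAlgAut_apply, h1]
  rw [← hUdef, uconj_sub]
  have hfn : (RCLike.ofReal ∘ hX.eigenvalues - fun _ : Fin d => (u:ℂ))
      = fun i => ((hX.eigenvalues i - u : ℝ) : ℂ) := by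
    funext i; simp [Function.comp, Complex.ofReal_sub]
  rw [hfn]


lemma pairing_le {W : Matrix (Fin d) (Fin d) ℂ} (hW : W.IsHermitian)
    {R : Matrix (Fin d) (Fin d) ℂ} (hR : R.PosSemidef) (hR1 : (1 - R).PosSemidef) (u : ℝ) :
    ((W - (u : ℂ) • 1) * R).trace.re ≤ ∑ i, max (hW.eigenvalues i - u) 0 := by
  set U := (hW.eigenvectorUnitary : Matrix (Fin d) (Fin d) ℂ) with hUdef
  have hU : U ∈ Matrix.unitaryGroup (Fin d) ℂ := hW.eigenvectorUnitary.2
  have hUU : star U * U = 1 := Matrix.mem_unitaryGroup_iff'.mp hU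
  set V := star U * R * U with hVdef
  have hV : V.PosSemidef := by
    have h2 := hR.mul_mul_conjTranspose_same (star U)
    rwa [← Matrix.star_eq_conjTranspose, star_star] at h2
  have hV1 : (1 - V).PosSemidef := by
    have h2 := hR1.mul_mul_conjTranspose_same (star U)
    rwa [← Matrix.star_eq_conjTranspose, star_star, Matrix.mul_sub, Matrix.sub_mul,
      mul_one, hUU] at h2
  -- trace formula
  have htr : ((W - (u : ℂ) • 1) * R).trace
      = ∑ i, ((hW.eigenvalues i - u : ℝ) : ℂ) * V i i := by
    rw [shift_decomp hW u, ← hUdef]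
    set D := Matrix.diagonal (fun i => ((hW.eigenvalues i - u : ℝ) : ℂ)) with hDdef
    have hassoc : (U * D * star U) * R = U * (D * star U * R) := by
      simp only [mul_assoc]
    rw [hassoc, Matrix.trace_mul_comm]
    have h2 : D * star U * R * U = D * V := by
      rw [hVdef]; simp only [mul_assoc]
    rw [h2, hDdef]
    simp [Matrix.trace, Matrix.diag, Matrix.diagonal_mul]
  rw [htr, Complex.re_sum]
  apply Finset.sum_le_sum
  intro i _
  rw [Complex.re_ofReal_mul]
  have h0 : 0 ≤ (V i i).re := (Complex.le_def.mp (psd_diag_entry_nonneg hV i)).1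
  have h1 : (V i i).re ≤ 1 := by
    have := (Complex.le_def.mp (psd_diag_entry_nonneg hV1 i)).1
    rw [Matrix.sub_apply, Matrix.one_apply_eq] at this
    simpa using this
  rcases le_or_gt (hW.eigenvalues i - u) 0 with hc | hc
  · have : (hW.eigenvalues i - u) * (V i i).re ≤ 0 := mul_nonpos_of_nonpos_of_nonneg hc h0
    simp [max_eq_right hc, this]
  · have : (hW.eigenvalues i - u) * (V i i).re ≤ (hW.eigenvalues i - u) * 1 :=
      mul_le_mul_of_nonneg_left h1 hc.le
    rw [max_eq_left hc.le]
    linarith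

lemma proj_exists {X : Matrix (Fin d) (Fin d) ℂ} (hX : X.IsHermitian) (u : ℝ) :
    ∃ R : Matrix (Fin d) (Fin d) ℂ, R.PosSemidef ∧ (1 - R).PosSemidef ∧
      ((X - (u : ℂ) • 1) * R).trace.re = ∑ i, max (hX.eigenvalues i - u) 0 := by
  set U := (hX.eigenvectorUnitary : Matrix (Fin d) (Fin d) ℂ) with hUdef
  have hU : U ∈ Matrix.unitaryGroup (Fin d) ℂ := hX.eigenvectorUnitary.2
  set ind : Fin d → ℂ := fun i => if u < hX.eigenvalues i then 1 else 0 with hind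
  refine ⟨U * Matrix.diagonal ind * star U, ?_, ?_, ?_⟩
  · refine uconj_psd hU fun i => ?_
    by_cases hc : u < hX.eigenvalues i <;> simp [hind, hc]
  · have h1 : (1 : Matrix (Fin d) (Fin d) ℂ) - U * Matrix.diagonal ind * star U
        = U * Matrix.diagonal ((fun _ => (1:ℂ)) - ind) * star U := by
      rw [← uconj_sub, uconj_one hU]
    rw [h1]
    refine uconj_psd hU fun i => ?_
    by_cases hc : u < hX.eigenvalues i <;> simp [hind, hc]
  · rw [shift_decomp hX u, ← hUdef, uconj_mul hU, uconj_trace hU, Complex.re_sum]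
    refine Finset.sum_congr rfl fun i _ => ?_
    by_cases hc : u < hX.eigenvalues i
    · rw [max_eq_left (by linarith)]
      simp [hind, hc]
    · rw [max_eq_right (by push_neg at hc; linarith)]
      simp [hind, hc]

end spectral




lemma sum_eigs {X : Matrix (Fin d) (Fin d) ℂ} (hX : X.IsHermitian) :
    ∑ i, hX.eigenvalues i = X.trace.re := by
  conv_rhs => rw [hX.spectral_theorem]
  rw [Unitary.conjStarAlgAut_apply, uconj_trace hX.eigenvectorUnitary.2, Complex.re_sum]
  refine Finset.sum_congr rfl fun i _ => ?_
  simp [Function.comp]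

lemma hinge_mono {X W : Matrix (Fin d) (Fin d) ℂ} (hX : X.IsHermitian) (hW : W.IsHermitian)
    (hXW : (W - X).PosSemidef) (u : ℝ) :
    ∑ i, max (hX.eigenvalues i - u) 0 ≤ ∑ i, max (hW.eigenvalues i - u) 0 := by
  obtain ⟨R, hR, hR1, hRe⟩ := proj_exists hX u
  have hid : (X - (u:ℂ) • 1) * R = (W - (u:ℂ) • 1) * R - (W - X) * R := by
    noncomm_ring
  have h1 : ((X - (u:ℂ) • 1) * R).trace.re
      = ((W - (u:ℂ) • 1) * R).trace.re - ((W - X) * R).trace.re := by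
    rw [hid, Matrix.trace_sub, Complex.sub_re]
  have h2 := psd_re_trace_mul_nonneg hXW hR
  have h3 := pairing_le hW hR hR1 u
  rw [← hRe, h1]
  linarith

lemma hinge_lip {X N : Matrix (Fin d) (Fin d) ℂ} (hX : X.IsHermitian) (hN : N.PosSemidef)
    (hXN : (X + N).IsHermitian) (u : ℝ) :
    ∑ i, max (hXN.eigenvalues i - u) 0
      ≤ (∑ i, max (hX.eigenvalues i - u) 0) + N.trace.re := by
  obtain ⟨R, hR, hR1, hRe⟩ := proj_exists hXN u
  have hid : (X + N - (u:ℂ) • 1) * R = (X - (u:ℂ) • 1) * R + (N * R) := by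
    noncomm_ring
  have h1 : ((X + N - (u:ℂ) • 1) * R).trace.re
      = ((X - (u:ℂ) • 1) * R).trace.re + (N * R).trace.re := by
    rw [hid, Matrix.trace_add, Complex.add_re]
  have h2 : (N * R).trace.re ≤ N.trace.re := by
    have hid2 : N * R = N - N * (1 - R) := by noncomm_ring
    have h3 := psd_re_trace_mul_nonneg hN hR1
    rw [hid2, Matrix.trace_sub, Complex.sub_re]
    linarith
  have h4 := pairing_le hX hR hR1 u
  rw [← hRe, h1]
  linarith

lemma trace_h_mono {X W : Matrix (Fin d) (Fin d) ℂ} (hX : X.IsHermitian) (hW : W.IsHermitian)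
    (hXW : (W - X).PosSemidef) :
    ∑ i, hfun (hX.eigenvalues i) ≤ ∑ i, hfun (hW.eigenvalues i) := by
  have := key_real 0 le_rfl hW.eigenvalues hX.eigenvalues
    (by
      rw [sum_eigs hX, sum_eigs hW, add_zero]
      have h2 := psd_re_trace_nonneg hXW
      rw [Matrix.trace_sub, Complex.sub_re] at h2
      linarith)
    (fun u => by rw [add_zero]; exact hinge_mono hX hW hXW u)
  simpa using this

lemma trace_h_lip {X N : Matrix (Fin d) (Fin d) ℂ} (hX : X.IsHermitian) (hN : N.PosSemidef)
    (hXN : (X + N).IsHermitian) :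
    ∑ i, hfun (hXN.eigenvalues i) ≤ (∑ i, hfun (hX.eigenvalues i)) + N.trace.re := by
  refine key_real N.trace.re (psd_re_trace_nonneg hN) hX.eigenvalues hXN.eigenvalues
    (by rw [sum_eigs hX, sum_eigs hXN, Matrix.trace_add, Complex.add_re])
    (fun u => hinge_lip hX hN hXN u)





lemma trace_cfc {X : Matrix (Fin d) (Fin d) ℂ} (hX : X.IsHermitian) (f : ℝ → ℝ) :
    (cfc f X).trace = ∑ i, (f (hX.eigenvalues i) : ℂ) := by
  rw [hX.cfc_eq f, Matrix.IsHermitian.cfc, Unitary.conjStarAlgAut_apply, uconj_trace hX.eigenvectorUnitary.2]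
  rfl

lemma exp_plus_one_eq_cfc {X : Matrix (Fin d) (Fin d) ℂ} (hX : X.IsHermitian) :
    NormedSpace.exp X + 1 = cfc (fun x : ℝ => Real.exp x + 1) X := by
  have hsa : IsSelfAdjoint X := hX
  open scoped Matrix.Norms.L2Operator in
  have h1 : cfc Real.exp X = NormedSpace.exp X := CFC.real_exp_eq_normedSpace_exp hsa
  have h2 : NormedSpace.exp X = NormedSpace.exp X := by
    rfl
  have h3 : cfc (fun x : ℝ => Real.exp x + 1) X = cfc Real.exp X + cfc (fun _ : ℝ => (1:ℝ)) X := by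
    rw [← cfc_add X Real.exp (fun _ => (1:ℝ)) Real.continuous_exp.continuousOn
      continuousOn_const]
  rw [h3, cfc_const 1 X, h2, ← h1]
  simp [Algebra.algebraMap_eq_smul_one]

lemma trLog_exp_eq {X : Matrix (Fin d) (Fin d) ℂ} (hX : X.IsHermitian) :
    trLog (NormedSpace.exp X + 1) = ∑ i, hfun (hX.eigenvalues i) := by
  have hsa : IsSelfAdjoint X := hX
  have hcomp : cfc Real.log (cfc (fun x : ℝ => Real.exp x + 1) X) = cfc hfun X := by
    rw [← cfc_comp Real.log (fun x : ℝ => Real.exp x + 1) X hsa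
      (by
        refine Real.continuousOn_log.mono ?_
        rintro y ⟨x, -, rfl⟩
        have : 0 < Real.exp x + 1 := by positivity
        simp [this.ne'])
      ((Real.continuous_exp.add continuous_const).continuousOn)]
    rfl
  rw [trLog, exp_plus_one_eq_cfc hX, hcomp, trace_cfc hX hfun, Complex.re_sum]
  simp

end FermiAux






lemma traceNorm_eq {H : Matrix (Fin d) (Fin d) ℂ} (hH : H.IsHermitian) :
    traceNorm H = ∑ i, |hH.eigenvalues i| := by
  rw [traceNorm, trace_cfc hH, Complex.re_sum]
  simp

theorem fermionic_free_energy_lipschitz (d : ℕ) (H₁ H₂ : Matrix (Fin d) (Fin d) ℂ)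
    (hH₁ : H₁.IsHermitian) (hH₂ : H₂.IsHermitian) :
    |trLog (NormedSpace.exp (-(H₁ + H₂)) + 1) - trLog (NormedSpace.exp (-H₁) + 1)|
      ≤ traceNorm H₂ := by
  have hA : (-H₁).IsHermitian := hH₁.neg
  have hB : (-(H₁ + H₂)).IsHermitian := (hH₁.add hH₂).neg
  rw [trLog_exp_eq hB, trLog_exp_eq hA, traceNorm_eq hH₂]
  set U := (hH₂.eigenvectorUnitary : Matrix (Fin d) (Fin d) ℂ) with hUdef
  have hU : U ∈ Matrix.unitaryGroup (Fin d) ℂ := hH₂.eigenvectorUnitary.2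
  set κ := hH₂.eigenvalues with hκdef
  set N := U * Matrix.diagonal (fun i => ((max (-(κ i)) 0 : ℝ) : ℂ)) * star U with hNdef
  set P := U * Matrix.diagonal (fun i => ((max (κ i) 0 : ℝ) : ℂ)) * star U with hPdef
  have hNpsd : N.PosSemidef := uconj_psd hU fun i => by
    rw [Complex.zero_le_real]; exact le_max_right _ _
  have hPpsd : P.PosSemidef := uconj_psd hU fun i => by
    rw [Complex.zero_le_real]; exact le_max_right _ _
  have hPN : P - N = H₂ := by
    rw [hPdef, hNdef, uconj_sub]
    have hfn : ((fun i => ((max (κ i) 0 : ℝ) : ℂ)) - fun i => ((max (-(κ i)) 0 : ℝ) : ℂ))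
        = fun i => ((κ i : ℝ) : ℂ) := by
      funext i
      simp only [Pi.sub_apply]
      rw [← Complex.ofReal_sub]
      congr 1
      rcases le_total (κ i) 0 with hc | hc
      · rw [max_eq_right hc, max_eq_left (by linarith)]; ring
      · rw [max_eq_left hc, max_eq_right (by linarith)]; ring
    rw [hfn]
    exact hH₂.spectral_theorem.symm
  have hNtr : N.trace.re = ∑ i, max (-(κ i)) 0 := by
    rw [hNdef, uconj_trace hU, Complex.re_sum]; simp
  have hPtr : P.trace.re = ∑ i, max (κ i) 0 := by
    rw [hPdef, uconj_trace hU, Complex.re_sum]; simp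
  have hANherm : (-H₁ + N).IsHermitian := hA.add hNpsd.1
  have hBPherm : (-(H₁ + H₂) + P).IsHermitian := hB.add hPpsd.1
  -- upper bound
  have hup1 : ∑ i, hfun (hB.eigenvalues i) ≤ ∑ i, hfun (hANherm.eigenvalues i) := by
    refine trace_h_mono hB hANherm ?_
    have : -H₁ + N - -(H₁ + H₂) = P := by rw [← hPN]; abel
    rw [this]; exact hPpsd
  have hup2 : ∑ i, hfun (hANherm.eigenvalues i)
      ≤ (∑ i, hfun (hA.eigenvalues i)) + N.trace.re := trace_h_lip hA hNpsd hANherm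
  -- lower bound
  have hlo1 : ∑ i, hfun (hA.eigenvalues i) ≤ ∑ i, hfun (hBPherm.eigenvalues i) := by
    refine trace_h_mono hA hBPherm ?_
    have : -(H₁ + H₂) + P - -H₁ = N := by rw [← hPN]; abel
    rw [this]; exact hNpsd
  have hlo2 : ∑ i, hfun (hBPherm.eigenvalues i)
      ≤ (∑ i, hfun (hB.eigenvalues i)) + P.trace.re := trace_h_lip hB hPpsd hBPherm
  -- combine
  have habs1 : ∑ i, max (-(κ i)) 0 ≤ ∑ i, |κ i| := by
    refine Finset.sum_le_sum fun i _ => max_le ?_ (abs_nonneg _)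
    rw [← abs_neg]; exact le_abs_self _
  have habs2 : ∑ i, max (κ i) 0 ≤ ∑ i, |κ i| :=
    Finset.sum_le_sum fun i _ => max_le (le_abs_self _) (abs_nonneg _)
  rw [abs_le]
  constructor
  · rw [hPtr] at hlo2; linarith
  · rw [hNtr] at hup2; linarith
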